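/- Let E, F ∈ ℝ^{n×d} have orthonormal columns with singular values σ₁,…,σ_d ∈ [0,1] of EᵀF. Then ‖EEᵀ − FFᵀ‖_F² = 2d − 2·Σ_{i=1}^d σ_i², and combining with the Procrustes residual it follows that 2d − 2Σσ_i ≤ 2d − 2Σσ_i² ≤ 2(2d − 2Σσ_i), proving the two-sided bound of Theorem 1. -/
import Mathlib


open Matrix BigOperators

noncomputable def frobSq {n m : ℕ} (M : Matrix (Fin n) (Fin m) ℝ) : ℝ :=
  ∑ i, ∑ j, (M i j) ^ 2

lemma frobSq_eq_trace {n m : ℕ} (M : Matrix (Fin n) (Fin m) ℝ) :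
    frobSq M = Matrix.trace (Mᵀ * M) := by
  simp only [frobSq, Matrix.trace, Matrix.diag, Matrix.mul_apply, Matrix.transpose_apply]
  rw [Finset.sum_comm]
  simp [sq]

theorem stmt12 {n d : ℕ} (E F : Matrix (Fin n) (Fin d) ℝ)
    (hE : Eᵀ * E = 1) (hF : Fᵀ * F = 1)
    (U V : Matrix (Fin d) (Fin d) ℝ) (σ : Fin d → ℝ)
    (hσ0 : ∀ i, 0 ≤ σ i) (hσ1 : ∀ i, σ i ≤ 1)
    (hU : Uᵀ * U = 1) (hU' : U * Uᵀ = 1)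
    (hV : Vᵀ * V = 1) (hV' : V * Vᵀ = 1)
    (hSVD : Eᵀ * F = U * Matrix.diagonal σ * Vᵀ) :
    frobSq (E * Eᵀ - F * Fᵀ) = 2 * d - 2 * ∑ i, (σ i) ^ 2 ∧
    2 * d - 2 * ∑ i, σ i ≤ 2 * d - 2 * ∑ i, (σ i) ^ 2 ∧
    2 * d - 2 * ∑ i, (σ i) ^ 2 ≤ 2 * (2 * d - 2 * ∑ i, σ i) := by
  have hEE : Matrix.trace (E * Eᵀ * (E * Eᵀ)) = (d : ℝ) := by
    have : E * Eᵀ * (E * Eᵀ) = E * ((Eᵀ * E) * Eᵀ) := by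
      simp only [Matrix.mul_assoc]
    rw [this, hE, Matrix.one_mul, Matrix.trace_mul_comm, hE]
    simp
  have hFF : Matrix.trace (F * Fᵀ * (F * Fᵀ)) = (d : ℝ) := by
    have : F * Fᵀ * (F * Fᵀ) = F * ((Fᵀ * F) * Fᵀ) := by
      simp only [Matrix.mul_assoc]
    rw [this, hF, Matrix.one_mul, Matrix.trace_mul_comm, hF]
    simp
  have hcross : Matrix.trace (E * Eᵀ * (F * Fᵀ)) = ∑ i, (σ i) ^ 2 := by
    have h1 : E * Eᵀ * (F * Fᵀ) = E * ((Eᵀ * F) * Fᵀ) := by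
      simp only [Matrix.mul_assoc]
    rw [h1, Matrix.trace_mul_comm]
    have h2 : Eᵀ * F * Fᵀ * E = (Eᵀ * F) * (Eᵀ * F)ᵀ := by
      rw [Matrix.transpose_mul, Matrix.transpose_transpose, Matrix.mul_assoc]
    rw [h2, hSVD]
    have h3 : U * Matrix.diagonal σ * Vᵀ * (U * Matrix.diagonal σ * Vᵀ)ᵀ
        = U * (Matrix.diagonal σ * (Vᵀ * V) * (Matrix.diagonal σ)ᵀ * Uᵀ) := by
      simp only [Matrix.transpose_mul, Matrix.transpose_transpose, Matrix.mul_assoc]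
    rw [h3, hV, Matrix.mul_one, Matrix.trace_mul_comm]
    have h4 : Matrix.diagonal σ * (Matrix.diagonal σ)ᵀ * Uᵀ * U
        = Matrix.diagonal σ * (Matrix.diagonal σ)ᵀ * (Uᵀ * U) := by
      simp only [Matrix.mul_assoc]
    rw [h4, hU, Matrix.mul_one, Matrix.diagonal_transpose, Matrix.diagonal_mul_diagonal]
    simp [Matrix.trace, sq]
  have hmain : frobSq (E * Eᵀ - F * Fᵀ) = 2 * d - 2 * ∑ i, (σ i) ^ 2 := by
    rw [frobSq_eq_trace]
    have hsymm : (E * Eᵀ - F * Fᵀ)ᵀ = E * Eᵀ - F * Fᵀ := by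
      simp [Matrix.transpose_sub, Matrix.transpose_mul]
    rw [hsymm, Matrix.sub_mul, Matrix.mul_sub, Matrix.mul_sub, Matrix.trace_sub,
      Matrix.trace_sub, Matrix.trace_sub, hEE, hFF, hcross]
    have hcross' : Matrix.trace (F * Fᵀ * (E * Eᵀ)) = ∑ i, (σ i) ^ 2 := by
      rw [Matrix.trace_mul_comm, hcross]
    rw [hcross']
    ring
  refine ⟨hmain, ?_, ?_⟩
  · have h : ∑ i, (σ i) ^ 2 ≤ ∑ i, σ i :=
      Finset.sum_le_sum fun i _ => by nlinarith [hσ0 i, hσ1 i]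
    linarith
  · have h : ∑ i, (2 * σ i - (σ i) ^ 2) ≤ ∑ _i : Fin d, (1 : ℝ) :=
      Finset.sum_le_sum fun i _ => by nlinarith [hσ0 i, hσ1 i]
    simp only [Finset.sum_sub_distrib, Finset.sum_const, Finset.card_univ,
      Fintype.card_fin, nsmul_eq_mul, mul_one, ← Finset.mul_sum] at h
    linarith
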